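/- arXiv:2403.17872 — 3 statements merged into one kernel-verified Lean document; each statement's English description precedes it below -/
import Mathlib

section
/- Let g ≥ 3, r ≥ 1, d integers with r − d + g ≥ 2, and let m = (m_2,…,m_g) be a torsion profile. If there exists an m-displacement tableau t : [(g−d+r) × (r+1)] → {1,…,g}, then there exists an m-displacement tableau t' : [(g−d+2r−1) × 2] → {1,…,g}. -/
/-- An `m`-displacement tableau of genus `g` on `[a × b] = {1,…,a} × {1,…,b}`:
a function `t` strictly increasing in each coordinate separately, with values in
`{1,…,g}`, such that `t x y = t x' y'` implies `x - y ≡ x' - y' (mod m (t x y))`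
(congruence mod 0 meaning equality). -/
def IsDispTableau (g : ℕ) (m : ℕ → ℕ) (a b : ℕ) (t : ℕ → ℕ → ℕ) : Prop :=
  (∀ x y, 1 ≤ x → x ≤ a → 1 ≤ y → y ≤ b → 1 ≤ t x y ∧ t x y ≤ g) ∧
  (∀ x y, 1 ≤ x → x + 1 ≤ a → 1 ≤ y → y ≤ b → t x y < t (x + 1) y) ∧
  (∀ x y, 1 ≤ x → x ≤ a → 1 ≤ y → y + 1 ≤ b → t x y < t x (y + 1)) ∧
  (∀ x y x' y', 1 ≤ x → x ≤ a → 1 ≤ y → y ≤ b → 1 ≤ x' → x' ≤ a → 1 ≤ y' → y' ≤ b →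
    t x y = t x' y' →
    Int.ModEq (m (t x y) : ℤ) ((x : ℤ) - (y : ℤ)) ((x' : ℤ) - (y' : ℤ)))

namespace DispAux

/-- transfer a congruence to another pair with the same difference -/
lemma modeq_transfer {n p q p' q' : ℤ} (h : Int.ModEq n p q) (e : q' - p' = q - p) :
    Int.ModEq n p' q' := by
  rw [Int.modEq_iff_dvd] at h ⊢
  rwa [e]

section helpers

variable {g : ℕ} {m : ℕ → ℕ} {a b : ℕ} {t : ℕ → ℕ → ℕ}

/-- strict increase along a column over several steps -/
lemma col_lt (h : IsDispTableau g m a b t) {x x' y : ℕ}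
    (hx : 1 ≤ x) (hxx : x < x') (hx' : x' ≤ a) (hy : 1 ≤ y) (hyb : y ≤ b) :
    t x y < t x' y := by
  obtain ⟨k, rfl⟩ : ∃ k, x' = x + (k + 1) := ⟨x' - x - 1, by omega⟩
  induction k with
  | zero => exact h.2.1 x y hx (by omega) hy hyb
  | succ k ih =>
      have h1 : t x y < t (x + (k + 1)) y := ih (by omega) (by omega)
      have h2 : t (x + (k + 1)) y < t (x + (k + 1) + 1) y :=
        h.2.1 _ y (by omega) (by omega) hy hyb
      have : x + (k + 1) + 1 = x + (k + 1 + 1) := by omega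
      rw [this] at h2
      exact lt_trans h1 h2

/-- strict increase along a row over several steps -/
lemma row_lt (h : IsDispTableau g m a b t) {x y y' : ℕ}
    (hx : 1 ≤ x) (hxa : x ≤ a) (hy : 1 ≤ y) (hyy : y < y') (hy' : y' ≤ b) :
    t x y < t x y' := by
  obtain ⟨k, rfl⟩ : ∃ k, y' = y + (k + 1) := ⟨y' - y - 1, by omega⟩
  induction k with
  | zero => exact h.2.2.1 x y hx hxa hy (by omega)
  | succ k ih =>
      have h1 : t x y < t x (y + (k + 1)) := ih (by omega) (by omega)
      have h2 : t x (y + (k + 1)) < t x (y + (k + 1) + 1) :=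
        h.2.2.1 x _ hx hxa (by omega) (by omega)
      have : y + (k + 1) + 1 = y + (k + 1 + 1) := by omega
      rw [this] at h2
      exact lt_trans h1 h2

lemma col_le (h : IsDispTableau g m a b t) {x x' y : ℕ}
    (hx : 1 ≤ x) (hxx : x ≤ x') (hx' : x' ≤ a) (hy : 1 ≤ y) (hyb : y ≤ b) :
    t x y ≤ t x' y := by
  rcases eq_or_lt_of_le hxx with rfl | hlt
  · exact le_rfl
  · exact (col_lt h hx hlt hx' hy hyb).le

/-- restriction to fewer rows -/
lemma restrict_rows (h : IsDispTableau g m a b t) {a' : ℕ} (ha : a' ≤ a) :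
    IsDispTableau g m a' b t :=
  ⟨fun x y h1 h2 h3 h4 => h.1 x y h1 (h2.trans ha) h3 h4,
   fun x y h1 h2 h3 h4 => h.2.1 x y h1 (h2.trans ha) h3 h4,
   fun x y h1 h2 h3 h4 => h.2.2.1 x y h1 (h2.trans ha) h3 h4,
   fun x y x' y' h1 h2 h3 h4 h5 h6 h7 h8 he =>
     h.2.2.2 x y x' y' h1 (h2.trans ha) h3 h4 h5 (h6.trans ha) h7 h8 he⟩

/-- restriction to fewer columns -/
lemma restrict_cols (h : IsDispTableau g m a b t) {b' : ℕ} (hb : b' ≤ b) :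
    IsDispTableau g m a b' t :=
  ⟨fun x y h1 h2 h3 h4 => h.1 x y h1 h2 h3 (h4.trans hb),
   fun x y h1 h2 h3 h4 => h.2.1 x y h1 h2 h3 (h4.trans hb),
   fun x y h1 h2 h3 h4 => h.2.2.1 x y h1 h2 h3 (by omega),
   fun x y x' y' h1 h2 h3 h4 h5 h6 h7 h8 he =>
     h.2.2.2 x y x' y' h1 h2 h3 (h4.trans hb) h5 h6 h7 (h8.trans hb) he⟩

/-- transposition -/
lemma transpose (h : IsDispTableau g m a b t) :
    IsDispTableau g m b a (fun x y => t y x) := by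
  refine ⟨?_, ?_, ?_, ?_⟩
  · intro x y h1 h2 h3 h4
    exact h.1 y x h3 h4 h1 h2
  · intro x y h1 h2 h3 h4
    exact h.2.2.1 y x h3 h4 h1 h2
  · intro x y h1 h2 h3 h4
    exact h.2.1 y x h3 h4 h1 h2
  · intro x y x' y' h1 h2 h3 h4 h5 h6 h7 h8 he
    have := h.2.2.2 y x y' x' h3 h4 h1 h2 h7 h8 h5 h6 he
    have hneg := this.neg
    simpa [neg_sub] using hneg

end helpers

section append

variable {g : ℕ} {m : ℕ → ℕ}

/-- Append one bottom row `(α, β)` to a two-column tableau with `A - 1` rows. -/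
lemma append_row {A : ℕ} (hA : 2 ≤ A) {t'' : ℕ → ℕ → ℕ} {α β : ℕ}
    (h'' : IsDispTableau g m (A - 1) 2 t'')
    (hα1 : 1 ≤ α) (hαg : α ≤ g) (hβg : β ≤ g) (hαβ : α < β)
    (hcol1 : ∀ x, 1 ≤ x → x ≤ A - 1 → t'' x 1 < α)
    (hcol2lt : ∀ x, 1 ≤ x → x < A - 1 → t'' x 2 < α)
    (hcol2top : t'' (A - 1) 2 ≤ α)
    (hcol2topβ : t'' (A - 1) 2 < β)
    (hcol2eq : t'' (A - 1) 2 = α → ((m α : ℤ)) ∣ 2) :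
    IsDispTableau g m A 2 (fun x y => if x < A then t'' x y else if y = 1 then α else β) := by
  set t' : ℕ → ℕ → ℕ := fun x y => if x < A then t'' x y else if y = 1 then α else β with ht'
  -- any in-range value of t'' in column y is < β, and < α unless it is the top of col 2
  have hvalβ : ∀ x y, 1 ≤ x → x ≤ A - 1 → 1 ≤ y → y ≤ 2 → t'' x y < β := by
    intro x y h1 h2 h3 h4
    interval_cases y
    · exact lt_trans (hcol1 x h1 h2) hαβ
    · rcases lt_or_eq_of_le (show x ≤ A - 1 from h2) with hx | rfl
      · exact lt_trans (hcol2lt x h1 hx) hαβ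
      · exact hcol2topβ
  refine ⟨?_, ?_, ?_, ?_⟩
  · -- bounds
    intro x y h1 h2 h3 h4
    by_cases hx : x < A
    · simp only [ht', if_pos hx]
      exact h''.1 x y h1 (by omega) h3 h4
    · simp only [ht', if_neg hx]
      by_cases hy : y = 1
      · rw [if_pos hy]
        exact ⟨hα1, hαg⟩
      · rw [if_neg hy]
        exact ⟨by omega, hβg⟩
  · -- column increase
    intro x y h1 h2 h3 h4
    by_cases hx : x + 1 < A
    · simp only [ht', if_pos (show x < A by omega), if_pos hx]
      exact h''.2.1 x y h1 (by omega) h3 h4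
    · have hxA : x + 1 = A := by omega
      have hx1 : x < A := by omega
      have hx2 : ¬ (x + 1 < A) := by omega
      simp only [ht', if_pos hx1, if_neg hx2]
      by_cases hy : y = 1
      · subst hy
        simp only [if_pos rfl]
        exact hcol1 x h1 (by omega)
      · have hy2 : y = 2 := by omega
        subst hy2
        simp only [if_neg (by norm_num : (2:ℕ) ≠ 1)]
        exact hvalβ x 2 h1 (by omega) (by norm_num) le_rfl
  · -- row increase
    intro x y h1 h2 h3 h4
    have hy1 : y = 1 := by omega
    subst hy1
    by_cases hx : x < A
    · simp only [ht', if_pos hx]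
      exact h''.2.2.1 x 1 h1 (by omega) le_rfl (by norm_num)
    · simp only [ht', if_neg hx]
      simpa using hαβ
  · -- congruences
    intro x y x' y' h1 h2 h3 h4 h5 h6 h7 h8 he
    by_cases hx : x < A <;> by_cases hx' : x' < A
    · -- both in t''
      simp only [ht', if_pos hx, if_pos hx'] at he ⊢
      exact h''.2.2.2 x y x' y' h1 (by omega) h3 h4 h5 (by omega) h7 h8 he
    · -- x in t'', x' = A
      have hxA : x' = A := by omega
      simp only [ht', if_pos hx, if_neg hx'] at he ⊢
      by_cases hy' : y' = 1
      · -- value α : forces (x,y) = (A-1, 2) and t'' (A-1) 2 = α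
        rw [if_pos hy'] at he
        subst hy'
        have hy2 : y = 2 := by
          by_contra hcon
          have hy1 : y = 1 := by omega
          subst hy1
          exact absurd he (ne_of_lt (hcol1 x h1 (by omega)))
        subst hy2
        have hxtop : x = A - 1 := by
          by_contra hcon
          have : x < A - 1 := by omega
          exact absurd he (ne_of_lt (hcol2lt x h1 this))
        subst hxtop
        have hdvd : ((m α : ℤ)) ∣ 2 := hcol2eq he
        rw [he]
        rw [Int.modEq_iff_dvd]
        have harith : ((x' : ℤ) - ((1:ℕ):ℤ)) - (((A - 1 : ℕ) : ℤ) - ((2:ℕ):ℤ)) = 2 := by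
          omega
        rw [harith]
        exact hdvd
      · -- value β : impossible, all t'' values are < β
        rw [if_neg hy'] at he
        exact absurd he (ne_of_lt (hvalβ x y h1 (by omega) h3 h4))
    · -- x = A, x' in t'' : symmetric
      have hxA : x = A := by omega
      simp only [ht', if_neg hx, if_pos hx'] at he ⊢
      by_cases hy : y = 1
      · rw [if_pos hy] at he
        subst hy
        have hy2 : y' = 2 := by
          by_contra hcon
          have hy1 : y' = 1 := by omega
          subst hy1
          exact absurd he.symm (ne_of_lt (hcol1 x' h5 (by omega)))
        subst hy2
        have hxtop : x' = A - 1 := by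
          by_contra hcon
          have : x' < A - 1 := by omega
          exact absurd he.symm (ne_of_lt (hcol2lt x' h5 this))
        subst hxtop
        have hdvd : ((m α : ℤ)) ∣ 2 := hcol2eq he.symm
        have hif : (if (1:ℕ) = 1 then α else β) = α := if_pos rfl
        rw [hif]
        rw [Int.modEq_iff_dvd]
        have harith : (((A - 1 : ℕ) : ℤ) - ((2:ℕ):ℤ)) - ((x : ℤ) - ((1:ℕ):ℤ)) = -2 := by
          omega
        rw [harith]
        exact dvd_neg.mpr hdvd
      · rw [if_neg hy] at he
        exact absurd he.symm (ne_of_lt (hvalβ x' y' h5 (by omega) h7 h8))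
    · -- both x = A, x' = A
      have hxA : x = A := by omega
      have hx'A : x' = A := by omega
      subst hxA
      have hxx' : x = x' := by omega
      subst hxx'
      simp only [ht', if_neg hx] at he ⊢
      by_cases hy : y = 1 <;> by_cases hy' : y' = 1
      · have : y = y' := by omega
        subst this
        exact Int.ModEq.refl _
      · rw [if_pos hy, if_neg hy'] at he
        exact absurd he (ne_of_lt hαβ)
      · rw [if_neg hy, if_pos hy'] at he
        exact absurd he.symm (ne_of_lt hαβ)
      · have : y = y' := by omega
        subst this
        exact Int.ModEq.refl _

end append

/-- The key lemma: from an `m`-displacement tableau on `[a × b]` (`a, b ≥ 2`) one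
can build one on `[(a+b-2) × 2]`, with control on its last rows. -/
lemma key (g : ℕ) (m : ℕ → ℕ) :
    ∀ (N a b : ℕ) (t : ℕ → ℕ → ℕ), a + b ≤ N → 2 ≤ a → 2 ≤ b →
    IsDispTableau g m a b t →
    ∃ t' : ℕ → ℕ → ℕ,
      IsDispTableau g m (a + b - 2) 2 t' ∧
      t' (a + b - 2) 2 = t a b ∧
      (∀ x, 1 ≤ x → x < a + b - 2 → t' x 1 < max (t a (b - 1)) (t (a - 1) b)) ∧
      t' (a + b - 2) 1 ≤ max (t a (b - 1)) (t (a - 1) b) ∧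
      (∀ x, 1 ≤ x → x + 1 < a + b - 2 → t' x 2 < max (t a (b - 1)) (t (a - 1) b)) ∧
      t' (a + b - 3) 2 ≤ max (t a (b - 1)) (t (a - 1) b) := by
  intro N
  induction N with
  | zero => intro a b t hN ha hb _; omega
  | succ N ih =>
    intro a b t hN ha hb h
    by_cases hb2 : b = 2
    · -- base case b = 2 : t' = t
      subst hb2
      refine ⟨t, ?_, ?_, ?_, ?_, ?_, ?_⟩
      · have : a + 2 - 2 = a := by omega
        rw [this]
        exact h
      · rfl
      · intro x h1 h2
        have e1 : t x 1 ≤ t (a - 1) 1 := col_le h h1 (by omega) (by omega) le_rfl (by norm_num)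
        have e2 : t (a - 1) 1 < t (a - 1) 2 := row_lt h (by omega) (by omega) le_rfl (by norm_num) le_rfl
        exact lt_of_le_of_lt e1 (lt_of_lt_of_le e2 (le_max_right _ _))
      · exact le_max_left _ _
      · intro x h1 h2
        have e1 : t x 2 < t (a - 1) 2 := col_lt h h1 (by omega) (by omega) (by norm_num) le_rfl
        exact lt_of_lt_of_le e1 (le_max_right _ _)
      · have : a + 2 - 3 = a - 1 := by omega
        rw [this]
        exact le_max_right _ _
    · by_cases ha2 : a = 2
      · -- base case a = 2 (b ≥ 3) : transpose
        subst ha2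
        have hb3 : 3 ≤ b := by omega
        refine ⟨fun x y => t y x, ?_, ?_, ?_, ?_, ?_, ?_⟩
        · have : 2 + b - 2 = b := by omega
          rw [this]
          exact transpose h
        · show t 2 (2 + b - 2) = t 2 b
          have e : 2 + b - 2 = b := by omega
          rw [e]
        · intro x h1 h2
          show t 1 x < _
          have e1 : t 1 x < t 1 b := row_lt h le_rfl (by norm_num) h1 (by omega) le_rfl
          exact lt_of_lt_of_le e1 (le_max_right _ _)
        · show t 1 (2 + b - 2) ≤ _
          have e : 2 + b - 2 = b := by omega
          rw [e]
          exact le_max_right _ _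
        · intro x h1 h2
          show t 2 x < _
          have e1 : t 2 x < t 2 (b - 1) := row_lt h (by norm_num) le_rfl h1 (by omega) (by omega)
          exact lt_of_lt_of_le e1 (le_max_left _ _)
        · show t 2 (2 + b - 3) ≤ _
          have e : 2 + b - 3 = b - 1 := by omega
          rw [e]
          exact le_max_left _ _
      · -- inductive step : a ≥ 3 and b ≥ 3
        have ha3 : 3 ≤ a := by omega
        have hb3 : 3 ≤ b := by omega
        set A := a + b - 2 with hAdef
        have hA4 : 4 ≤ A := by omega
        by_cases hcase : t (a - 1) b ≤ t a (b - 1)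
        · -- row case : peel the last row, append (t a (b-1), t a b)
          set α := t a (b - 1) with hα
          set β := t a b with hβ
          have h2' : IsDispTableau g m (a - 1) b t := restrict_rows h (by omega)
          obtain ⟨t'', ht''tab, hY1, hY2, hY2', hY3, hY3'⟩ :=
            ih (a - 1) b t (by omega) (by omega) (by omega) h2'
          have hA'' : (a - 1) + b - 2 = A - 1 := by omega
          have hA''3 : (a - 1) + b - 3 = A - 2 := by omega
          rw [hA''] at ht''tab hY1 hY2 hY2'
          rw [hA''] at hY3
          rw [hA''3] at hY3'
          -- ρ'' < α
          have hρ1 : t (a - 1) (b - 1) < α := col_lt h (by omega) (by omega) le_rfl (by omega) (by omega)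
          have hρ2 : t (a - 1 - 1) b < t (a - 1) b := col_lt h (by omega) (by omega) (by omega) (by omega) le_rfl
          have hρ'' : max (t (a - 1) (b - 1)) (t (a - 1 - 1) b) < α :=
            max_lt hρ1 (lt_of_lt_of_le hρ2 hcase)
          have hcol1 : ∀ x, 1 ≤ x → x ≤ A - 1 → t'' x 1 < α := by
            intro x h1 h2
            rcases lt_or_eq_of_le h2 with hx | rfl
            · exact lt_trans (hY2 x h1 hx) hρ''
            · exact lt_of_le_of_lt hY2' hρ''
          have hcol2lt : ∀ x, 1 ≤ x → x < A - 1 → t'' x 2 < α := by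
            intro x h1 h2
            rcases lt_or_eq_of_le (show x ≤ A - 2 by omega) with hx | rfl
            · exact lt_trans (hY3 x h1 (by omega)) hρ''
            · exact lt_of_le_of_lt hY3' hρ''
          have hcol2topval : t'' (A - 1) 2 = t (a - 1) b := hY1
          have hcol2top : t'' (A - 1) 2 ≤ α := by rw [hcol2topval]; exact hcase
          have hβtop : t (a - 1) b < β := col_lt h (by omega) (by omega) le_rfl (by omega) le_rfl
          have hcol2topβ : t'' (A - 1) 2 < β := by rw [hcol2topval]; exact hβtop
          have hαb : 1 ≤ α ∧ α ≤ g := h.1 a (b - 1) (by omega) le_rfl (by omega) (by omega)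
          have hβb : 1 ≤ β ∧ β ≤ g := h.1 a b (by omega) le_rfl (by omega) le_rfl
          have hαβ : α < β := row_lt h (by omega) le_rfl (by omega) (by omega) le_rfl
          have hcol2eq : t'' (A - 1) 2 = α → ((m α : ℤ)) ∣ 2 := by
            intro heq
            rw [hcol2topval] at heq
            -- t (a-1) b = t a (b-1) : adjacent antidiagonal cells, gives m | 2
            have hcong := h.2.2.2 (a - 1) b a (b - 1) (by omega) (by omega) (by omega) le_rfl
              (by omega) le_rfl (by omega) (by omega) heq
            rw [heq] at hcong
            rw [Int.modEq_iff_dvd] at hcong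
            have : ((a : ℤ) - ((b - 1 : ℕ) : ℤ)) - (((a - 1 : ℕ) : ℤ) - (b : ℤ)) = 2 := by
              push_cast [Nat.cast_sub (by omega : 1 ≤ a), Nat.cast_sub (by omega : 1 ≤ b)]
              ring
            rw [this] at hcong
            exact hcong
          have happ := append_row (g := g) (m := m) (A := A) (by omega) ht''tab
            hαb.1 hαb.2 hβb.2 hαβ hcol1 hcol2lt hcol2top hcol2topβ hcol2eq
          have hmax : max (t a (b - 1)) (t (a - 1) b) = α := max_eq_left hcase
          refine ⟨_, happ, ?_, ?_, ?_, ?_, ?_⟩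
          · simp only [if_neg (lt_irrefl A)]
            norm_num
          · intro x h1 h2
            simp only [if_pos h2]
            rw [hmax]
            exact hcol1 x h1 (by omega)
          · rw [hmax]
            simp
          · intro x h1 h2
            simp only [if_pos (show x < A by omega)]
            rw [hmax]
            exact hcol2lt x h1 (by omega)
          · have hlt : A - 1 < A := by omega
            have e3 : a + b - 3 = A - 1 := by omega
            rw [e3]
            simp only [if_pos hlt]
            rw [hmax]
            exact hcol2top
        · -- column case : peel the last column, append (t (a-1) b, t a b)
          push_neg at hcase
          set α := t (a - 1) b with hα
          set β := t a b with hβ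
          have h1' : IsDispTableau g m a (b - 1) t := restrict_cols h (by omega)
          obtain ⟨t'', ht''tab, hY1, hY2, hY2', hY3, hY3'⟩ :=
            ih a (b - 1) t (by omega) (by omega) (by omega) h1'
          have hA'' : a + (b - 1) - 2 = A - 1 := by omega
          have hA''3 : a + (b - 1) - 3 = A - 2 := by omega
          rw [hA''] at ht''tab hY1 hY2 hY2'
          rw [hA''] at hY3
          rw [hA''3] at hY3'
          have hρ1 : t a (b - 1 - 1) < t a (b - 1) := row_lt h (by omega) le_rfl (by omega) (by omega) (by omega)
          have hρ2 : t (a - 1) (b - 1) < α := row_lt h (by omega) (by omega) (by omega) (by omega) le_rfl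
          have hρ'' : max (t a (b - 1 - 1)) (t (a - 1) (b - 1)) < α :=
            max_lt (lt_trans hρ1 hcase) hρ2
          have hcol1 : ∀ x, 1 ≤ x → x ≤ A - 1 → t'' x 1 < α := by
            intro x h1 h2
            rcases lt_or_eq_of_le h2 with hx | rfl
            · exact lt_trans (hY2 x h1 hx) hρ''
            · exact lt_of_le_of_lt hY2' hρ''
          have hcol2lt : ∀ x, 1 ≤ x → x < A - 1 → t'' x 2 < α := by
            intro x h1 h2
            rcases lt_or_eq_of_le (show x ≤ A - 2 by omega) with hx | rfl
            · exact lt_trans (hY3 x h1 (by omega)) hρ''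
            · exact lt_of_le_of_lt hY3' hρ''
          have hcol2topval : t'' (A - 1) 2 = t a (b - 1) := hY1
          have hcol2top : t'' (A - 1) 2 ≤ α := by rw [hcol2topval]; exact hcase.le
          have hβtop : t a (b - 1) < β := row_lt h (by omega) le_rfl (by omega) (by omega) le_rfl
          have hcol2topβ : t'' (A - 1) 2 < β := by rw [hcol2topval]; exact hβtop
          have hαb : 1 ≤ α ∧ α ≤ g := h.1 (a - 1) b (by omega) (by omega) (by omega) le_rfl
          have hβb : 1 ≤ β ∧ β ≤ g := h.1 a b (by omega) le_rfl (by omega) le_rfl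
          have hαβ : α < β := col_lt h (by omega) (by omega) le_rfl (by omega) le_rfl
          have hcol2eq : t'' (A - 1) 2 = α → ((m α : ℤ)) ∣ 2 := by
            intro heq
            rw [hcol2topval] at heq
            exact absurd heq (ne_of_lt hcase)
          have happ := append_row (g := g) (m := m) (A := A) (by omega) ht''tab
            hαb.1 hαb.2 hβb.2 hαβ hcol1 hcol2lt hcol2top hcol2topβ hcol2eq
          have hmax : max (t a (b - 1)) (t (a - 1) b) = α := max_eq_right hcase.le
          refine ⟨_, happ, ?_, ?_, ?_, ?_, ?_⟩
          · simp only [if_neg (lt_irrefl A)]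
            norm_num
          · intro x h1 h2
            simp only [if_pos h2]
            rw [hmax]
            exact hcol1 x h1 (by omega)
          · rw [hmax]
            simp
          · intro x h1 h2
            simp only [if_pos (show x < A by omega)]
            rw [hmax]
            exact hcol2lt x h1 (by omega)
          · have hlt : A - 1 < A := by omega
            have e3 : a + b - 3 = A - 1 := by omega
            rw [e3]
            simp only [if_pos hlt]
            rw [hmax]
            exact hcol2top

end DispAux

/-- Theorem 2 of the paper: if g ≥ 3, r ≥ 1, r - d + g ≥ 2 and there
is an m-displacement tableau on [(g-d+r) × (r+1)], then there is one on
[(g-d+2r-1) × 2]. -/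
theorem stmt6 (g : ℕ) (hg : 3 ≤ g) (r : ℕ) (hr : 1 ≤ r) (d : ℤ)
    (hrd : 2 ≤ (r : ℤ) - d + g) (m : ℕ → ℕ)
    (a : ℕ) (haeq : (a : ℤ) = (g : ℤ) - d + r)
    (ht : ∃ t, IsDispTableau g m a (r + 1) t) :
    ∃ (a' : ℕ) (t' : ℕ → ℕ → ℕ),
      (a' : ℤ) = (g : ℤ) - d + 2 * r - 1 ∧ IsDispTableau g m a' 2 t' := by
  obtain ⟨t, htab⟩ := ht
  have ha2 : 2 ≤ a := by
    have : (2 : ℤ) ≤ (a : ℤ) := by rw [haeq]; linarith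
    exact_mod_cast this
  have hb2 : 2 ≤ r + 1 := by omega
  obtain ⟨t', ht', _⟩ :=
    DispAux.key g m (a + (r + 1)) a (r + 1) t le_rfl ha2 hb2 htab
  refine ⟨a + (r + 1) - 2, t', ?_, ht'⟩
  have hcast : ((a + (r + 1) - 2 : ℕ) : ℤ) = (a : ℤ) + (r : ℤ) - 1 := by
    have h1 : 2 ≤ a + (r + 1) := by omega
    push_cast [Nat.cast_sub h1]
    ring
  rw [hcast, haeq]
  ring
end

section
/- Let t' : [a × 2] → {1,…,g} be an m-displacement tableau whose image omits at least k values v_1 < v_2 < … with all omitted values greater than t'(a,2), where k ≥ 2 is even. Then there exists an m-displacement tableau t'' : [(a + k/2) × 2] → {1,…,g}, obtained by appending rows (v_{2i−1}, v_{2i}) for i = 1,…,k/2. -/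
/-- an m-displacement tableau on [a × 2] omitting k values
v 1 < v 2 < … < v k of {1,…,g}, all greater than t'(a,2) (k ≥ 2 even), extends to an
m-displacement tableau on [(a + k/2) × 2] by appending rows (v (2i-1), v (2i)). -/
theorem stmt11 (g : ℕ) (m : ℕ → ℕ) (a : ℕ) (ha : 1 ≤ a) (t' : ℕ → ℕ → ℕ)
    (ht' : IsDispTableau g m a 2 t') (k : ℕ) (hk2 : 2 ≤ k) (hkeven : Even k)
    (v : ℕ → ℕ)
    (hmono : ∀ i j, 1 ≤ i → i < j → j ≤ k → v i < v j)
    (hle : ∀ i, 1 ≤ i → i ≤ k → v i ≤ g)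
    (hbig : ∀ i, 1 ≤ i → i ≤ k → t' a 2 < v i)
    (homit : ∀ i, 1 ≤ i → i ≤ k →
      ∀ x y, 1 ≤ x → x ≤ a → 1 ≤ y → y ≤ 2 → t' x y ≠ v i) :
    ∃ t'' : ℕ → ℕ → ℕ,
      (∀ x y, 1 ≤ x → x ≤ a → 1 ≤ y → y ≤ 2 → t'' x y = t' x y) ∧
      (∀ i, 1 ≤ i → i ≤ k / 2 →
        t'' (a + i) 1 = v (2 * i - 1) ∧ t'' (a + i) 2 = v (2 * i)) ∧
      IsDispTableau g m (a + k / 2) 2 t'' := by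
  obtain ⟨hb, hxin, hyin, hd⟩ := ht'
  have ht1 : 1 ≤ t' a 2 := (hb a 2 ha le_rfl (by norm_num) (by norm_num)).1
  have hkd : 2 * (k / 2) = k := Nat.two_mul_div_two_of_even hkeven
  refine ⟨fun x y => if x ≤ a then t' x y else v (2 * (x - a) - 2 + y), ?_, ?_, ?_, ?_, ?_, ?_⟩
  · intro x y _ hxa _ _; simp [hxa]
  · intro i hi hik
    constructor
    · have h1 : ¬ (a + i ≤ a) := by omega
      simp only [h1, if_false]
      congr 1; omega
    · have h1 : ¬ (a + i ≤ a) := by omega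
      simp only [h1, if_false]
      congr 1; omega
  · -- bounds
    intro x y hx hxa hy hyb
    by_cases h : x ≤ a
    · simp only [h, if_true]; exact hb x y hx h hy hyb
    · simp only [h, if_false]
      have hj1 : 1 ≤ 2 * (x - a) - 2 + y := by omega
      have hjk : 2 * (x - a) - 2 + y ≤ k := by omega
      exact ⟨le_trans ht1 (hbig _ hj1 hjk).le, hle _ hj1 hjk⟩
  · -- row increase
    intro x y hx hxa hy hyb
    by_cases h : x + 1 ≤ a
    · have h' : x ≤ a := by omega
      simp only [h, h', if_true]; exact hxin x y hx h hy hyb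
    · by_cases h' : x ≤ a
      · have hxa' : x = a := by omega
        simp only [h, h', if_true, if_false]
        have hidx : 2 * (x + 1 - a) - 2 + y = y := by omega
        rw [hidx, hxa']
        interval_cases y
        · exact lt_trans (hyin a 1 ha le_rfl (by norm_num) (by norm_num))
            (hbig 1 le_rfl (by omega))
        · exact hbig 2 (by norm_num) hk2
      · simp only [h, h', if_false]
        apply hmono <;> omega
  · -- column increase
    intro x y hx hxa hy hyb
    have hy1 : y = 1 := by omega
    subst hy1
    by_cases h : x ≤ a
    · simp only [h, if_true]; exact hyin x 1 hx h (by norm_num) (by norm_num)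
    · simp only [h, if_false]
      apply hmono <;> omega
  · -- displacement
    intro x y x' y' hx hxa hy hyb hx' hxa' hy' hyb' heq
    by_cases h : x ≤ a <;> by_cases h' : x' ≤ a <;>
      simp only [h, h', if_true, if_false] at heq ⊢
    · exact hd x y x' y' hx h hy hyb hx' h' hy' hyb' heq
    · exact absurd heq (homit _ (by omega) (by omega) x y hx h hy hyb)
    · exact absurd heq.symm (homit _ (by omega) (by omega) x' y' hx' h' hy' hyb')
    · have hj : 2 * (x - a) - 2 + y = 2 * (x' - a) - 2 + y' := by
        rcases lt_trichotomy (2 * (x - a) - 2 + y) (2 * (x' - a) - 2 + y') with hlt | he | hgt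
        · exact absurd heq (hmono _ _ (by omega) hlt (by omega)).ne
        · exact he
        · exact absurd heq.symm (hmono _ _ (by omega) hgt (by omega)).ne
      have hxy : x = x' ∧ y = y' := by omega
      obtain ⟨rfl, rfl⟩ := hxy
      rfl
end

section
/- Let m = (m_2,…,m_g) and let t : [a × 2] → {1,…,g} be an m-displacement tableau with t(a,2) ≤ g − 2c for some c ≥ 0. Then there exists an m-displacement tableau on [(a + c) × 2] → {1,…,g}. -/
lemma mono_x (g : ℕ) (m : ℕ → ℕ) (a b : ℕ) (t : ℕ → ℕ → ℕ)
    (ht : IsDispTableau g m a b t) :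
    ∀ d x y, 1 ≤ x → x + d ≤ a → 1 ≤ y → y ≤ b → t x y ≤ t (x + d) y := by
  intro d
  induction d with
  | zero => intro x y _ _ _ _; simp
  | succ n ih =>
    intro x y hx hxa hy hyb
    have h1 : t x y ≤ t (x + n) y := ih x y hx (by omega) hy hyb
    have h2 : t (x + n) y < t (x + n + 1) y := ht.2.1 (x + n) y (by omega) (by omega) hy hyb
    rw [← Nat.add_assoc]
    omega

/-- if t is an m-displacement tableau on [a × 2] with t(a,2) ≤ g - 2c,
then there is an m-displacement tableau on [(a + c) × 2]. -/
theorem stmt17 (g : ℕ) (m : ℕ → ℕ) (a : ℕ) (ha : 1 ≤ a) (c : ℕ)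
    (t : ℕ → ℕ → ℕ) (ht : IsDispTableau g m a 2 t) (hc : t a 2 + 2 * c ≤ g) :
    ∃ t', IsDispTableau g m (a + c) 2 t' := by
  obtain ⟨hb, hix, hiy, hmod⟩ := ht
  set t' : ℕ → ℕ → ℕ := fun x y => if x ≤ a then t x y else t a 2 + 2 * (x - a - 1) + y
    with ht'
  -- old values are ≤ t a 2
  have hold : ∀ x y, 1 ≤ x → x ≤ a → 1 ≤ y → y ≤ 2 → t x y ≤ t a 2 := by
    intro x y hx hxa hy hyb
    have h1 : t x y ≤ t (x + (a - x)) y :=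
      mono_x g m a 2 t ⟨hb, hix, hiy, hmod⟩ (a - x) x y hx (by omega) hy hyb
    have hxx : x + (a - x) = a := by omega
    rw [hxx] at h1
    rcases Nat.lt_or_ge y 2 with h | h
    · have hy1 : y = 1 := by omega
      subst hy1
      have := hiy a 1 ha le_rfl le_rfl le_rfl
      norm_num at this
      omega
    · have hy2 : y = 2 := by omega
      subst hy2
      omega
  have hval : ∀ x y, ¬ x ≤ a → t' x y = t a 2 + 2 * (x - a - 1) + y := by
    intro x y h; simp only [ht']; rw [if_neg h]
  have hvalo : ∀ x y, x ≤ a → t' x y = t x y := by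
    intro x y h; simp only [ht']; rw [if_pos h]
  refine ⟨t', ?_, ?_, ?_, ?_⟩
  · intro x y hx hxa hy hyb
    by_cases h : x ≤ a
    · rw [hvalo x y h]
      have := hb x y hx h hy hyb
      omega
    · rw [hval x y h]
      have h1 : 1 ≤ t a 2 := (hb a 2 ha le_rfl (by omega) le_rfl).1
      omega
  · intro x y hx hxa hy hyb
    by_cases h : x + 1 ≤ a
    · rw [hvalo x y (by omega), hvalo (x+1) y h]
      exact hix x y hx h hy hyb
    · by_cases h2 : x ≤ a
      · have hxA : x = a := by omega
        rw [hvalo x y h2, hval (x+1) y (by omega)]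
        subst hxA
        have := hold x y hx le_rfl hy hyb
        omega
      · rw [hval x y h2, hval (x+1) y (by omega)]
        omega
  · intro x y hx hxa hy hyb
    by_cases h : x ≤ a
    · rw [hvalo x y h, hvalo x (y+1) h]
      exact hiy x y hx h hy hyb
    · rw [hval x y h, hval x (y+1) h]
      omega
  · intro x y x' y' hx hxa hy hyb hx' hx'a hy' hy'b heq
    by_cases h : x ≤ a <;> by_cases h' : x' ≤ a
    · rw [hvalo x y h, hvalo x' y' h'] at heq
      rw [hvalo x y h]
      exact hmod x y x' y' hx h hy hyb hx' h' hy' hy'b heq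
    · exfalso
      rw [hvalo x y h, hval x' y' h'] at heq
      have := hold x y hx h hy hyb
      omega
    · exfalso
      rw [hval x y h, hvalo x' y' h'] at heq
      have := hold x' y' hx' h' hy' hy'b
      omega
    · rw [hval x y h, hval x' y' h'] at heq
      have hxx : x = x' ∧ y = y' := by omega
      obtain ⟨e1, e2⟩ := hxx
      subst e1; subst e2
      exact Int.ModEq.refl _
end
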